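/- arXiv:2312.03334 — 2 statements merged into one kernel-verified Lean document; each statement's English description precedes it below -/
import Mathlib

section
/- Let T be a self-similar tree, let A be a covering quotient of T, and let Ā be a minimal covering quotient of T. Then there exists a covering morphism p : A → Ā. -/
/-- A rooted directed multigraph. -/
structure RGraph where
  V : Type
  E : Type
  s : E → V
  t : E → V
  root : V

namespace RGraph

/-- `l` is a path: consecutive edges are composable. -/
def IsPath (A : RGraph) (l : List A.E) : Prop :=
  l.Chain' (fun e f => A.t e = A.s f)

/-- `l` is a path starting at the vertex `q`. -/
def PathFrom (A : RGraph) (q : A.V) (l : List A.E) : Prop :=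
  A.IsPath l ∧ ∀ e ∈ l.head?, A.s e = q

/-- The target of the path `l` started at `q` (equal to `q` for the empty path). -/
def pathTarget (A : RGraph) (q : A.V) (l : List A.E) : A.V :=
  l.foldl (fun _ e => A.t e) q

@[simp] lemma pathTarget_nil (A : RGraph) (q : A.V) : A.pathTarget q [] = q := rfl

@[simp] lemma pathTarget_cons (A : RGraph) (q : A.V) (a : A.E) (l : List A.E) :
    A.pathTarget q (a :: l) = A.pathTarget (A.t a) l := rfl

lemma pathTarget_append (A : RGraph) (q : A.V) (l l' : List A.E) :
    A.pathTarget q (l ++ l') = A.pathTarget (A.pathTarget q l) l' := by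
  simp [pathTarget]

@[simp] lemma pathTarget_append_single (A : RGraph) (q : A.V) (l : List A.E) (e : A.E) :
    A.pathTarget q (l ++ [e]) = A.t e := by
  rw [pathTarget_append]; rfl

lemma pathFrom_nil (A : RGraph) (q : A.V) : A.PathFrom q [] :=
  ⟨List.isChain_nil, by simp⟩

lemma pathTarget_getLast {A : RGraph} {q : A.V} {l : List A.E} {x : A.E}
    (hx : x ∈ l.getLast?) : A.pathTarget q l = A.t x := by
  induction l generalizing q with
  | nil => simp at hx
  | cons a l ih =>
    cases l with
    | nil => simp at hx; subst hx; rfl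
    | cons b l =>
      rw [List.getLast?_cons_cons] at hx
      simpa using ih (q := A.t a) hx

lemma pathFrom_append_single {A : RGraph} {q : A.V} {l : List A.E} {e : A.E}
    (h : A.PathFrom q l) (he : A.s e = A.pathTarget q l) :
    A.PathFrom q (l ++ [e]) := by
  constructor
  · apply List.isChain_append.mpr
    refine ⟨h.1, List.isChain_singleton _, ?_⟩
    intro x hx y hy
    simp at hy
    subst hy
    rw [he]
    exact (pathTarget_getLast hx).symm
  · intro f hf
    cases l with
    | nil =>
      simp at hf
      subst hf
      simpa using he
    | cons a l =>
      simp at hf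
      subst hf
      exact h.2 a (by simp)

/-- `w` is reachable from `q` by an oriented path. -/
def Reach (A : RGraph) (q w : A.V) : Prop :=
  ∃ l, A.PathFrom q l ∧ A.pathTarget q l = w

lemma reach_self (A : RGraph) (q : A.V) : A.Reach q q :=
  ⟨[], A.pathFrom_nil q, rfl⟩

lemma reach_target {A : RGraph} {q : A.V} {e : A.E} (h : A.Reach q (A.s e)) :
    A.Reach q (A.t e) := by
  obtain ⟨l, hl, ht⟩ := h
  exact ⟨l ++ [e], pathFrom_append_single hl ht.symm, by simp⟩

/-- A graph is connected (as a rooted directed graph) if every vertex is reachable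
from the root. -/
def Connected (A : RGraph) : Prop := ∀ w : A.V, A.Reach A.root w

/-- A graph is a tree if the target map from paths emanating from the root to
vertices is a bijection. -/
def IsTree (A : RGraph) : Prop :=
  Function.Bijective
    (fun l : {l : List A.E // A.PathFrom A.root l} => A.pathTarget A.root l.1)

/-- A graph is locally finite if every vertex has finitely many outgoing edges. -/
def LocallyFinite (A : RGraph) : Prop := ∀ q : A.V, Finite {e : A.E // A.s e = q}

/-- Adjacency: there is an edge from `v` to `w`. -/
def Adj (A : RGraph) (v w : A.V) : Prop := ∃ e, A.s e = v ∧ A.t e = w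

/-- The induced rooted subgraph on all vertices reachable from `q` (the "cone" at `q`). -/
def subgraph (A : RGraph) (q : A.V) : RGraph where
  V := {w // A.Reach q w}
  E := {e // A.Reach q (A.s e)}
  s := fun e => ⟨A.s e.1, e.2⟩
  t := fun e => ⟨A.t e.1, reach_target e.2⟩
  root := ⟨q, A.reach_self q⟩

/-- The truncation of the cone at `v` to vertices at distance at most `d` from `v`. -/
def trunc (A : RGraph) (v : A.V) (d : ℕ) : RGraph where
  V := {w // ∃ l, A.PathFrom v l ∧ A.pathTarget v l = w ∧ l.length ≤ d}
  E := {e // ∃ l, A.PathFrom v l ∧ A.pathTarget v l = A.s e ∧ l.length < d}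
  s := fun e => ⟨A.s e.1, e.2.imp fun _ h => ⟨h.1, h.2.1, h.2.2.le⟩⟩
  t := fun e => ⟨A.t e.1, by
    obtain ⟨l, h1, h2, h3⟩ := e.2
    exact ⟨l ++ [e.1], pathFrom_append_single h1 h2.symm, by simp,
      by simp only [List.length_append, List.length_singleton]; omega⟩⟩
  root := ⟨v, [], A.pathFrom_nil v, rfl, Nat.zero_le d⟩

/-- The universal covering tree of `A`: vertices are the paths emanating from the root. -/
def cover (A : RGraph) : RGraph where
  V := {l : List A.E // A.PathFrom A.root l}
  E := {x : {l : List A.E // A.PathFrom A.root l} × A.E //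
          A.s x.2 = A.pathTarget A.root x.1.1}
  s := fun x => x.1.1
  t := fun x => ⟨x.1.1.1 ++ [x.1.2], pathFrom_append_single x.1.1.2 x.2⟩
  root := ⟨[], A.pathFrom_nil _⟩

end RGraph

/-- A morphism of rooted directed multigraphs. -/
structure GraphHom (A B : RGraph) where
  v : A.V → B.V
  e : A.E → B.E
  root_eq : v A.root = B.root
  s_eq : ∀ x, B.s (e x) = v (A.s x)
  t_eq : ∀ x, B.t (e x) = v (A.t x)

namespace GraphHom

variable {A B : RGraph}

/-- The unique path lifting property. -/
def UPLP (p : GraphHom A B) : Prop :=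
  ∀ (q : A.V) (l' : List B.E), B.PathFrom (p.v q) l' →
    ∃! l : List A.E, A.PathFrom q l ∧ l.map p.e = l'

/-- A covering morphism: surjective on vertices, with the unique path lifting property. -/
def IsCovering (p : GraphHom A B) : Prop := Function.Surjective p.v ∧ p.UPLP

/-- An isomorphism of graphs: bijective on vertices and on edges. -/
def IsIso (p : GraphHom A B) : Prop := Function.Bijective p.v ∧ Function.Bijective p.e

/-- The restriction of the edge map to the edges emanating from `q`. -/
def outMap (p : GraphHom A B) (q : A.V) :
    {e : A.E // A.s e = q} → {e' : B.E // B.s e' = p.v q} :=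
  fun e => ⟨p.e e.1, by rw [p.s_eq, e.2]⟩

lemma isPath_map (p : GraphHom A B) {l : List A.E} (h : A.IsPath l) :
    B.IsPath (l.map p.e) := by
  rw [RGraph.IsPath]
  exact (List.isChain_map p.e).mpr (List.IsChain.imp (fun a b hab => by rw [p.t_eq, p.s_eq, hab]) h)

lemma pathFrom_map (p : GraphHom A B) {q : A.V} {l : List A.E} (h : A.PathFrom q l) :
    B.PathFrom (p.v q) (l.map p.e) := by
  refine ⟨p.isPath_map h.1, ?_⟩
  intro f hf
  cases l with
  | nil => simp at hf
  | cons a l =>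
    simp at hf
    subst hf
    rw [p.s_eq, h.2 a (by simp)]

lemma pathTarget_map (p : GraphHom A B) (q : A.V) (l : List A.E) :
    B.pathTarget (p.v q) (l.map p.e) = p.v (A.pathTarget q l) := by
  induction l generalizing q with
  | nil => rfl
  | cons a l ih =>
    show B.pathTarget (B.t (p.e a)) (l.map p.e) = _
    rw [p.t_eq]
    exact ih (A.t a)

lemma reach_map (p : GraphHom A B) {q w : A.V} (h : A.Reach q w) :
    B.Reach (p.v q) (p.v w) := by
  obtain ⟨l, hl, ht⟩ := h
  exact ⟨l.map p.e, p.pathFrom_map hl, by rw [p.pathTarget_map, ht]⟩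

end GraphHom

/-- Two graphs are isomorphic. -/
def RGraph.Iso (A B : RGraph) : Prop := ∃ p : GraphHom A B, p.IsIso

/-- The universal covering morphism from the universal covering tree of `A` to `A`. -/
def RGraph.uCover (A : RGraph) : GraphHom A.cover A where
  v := fun l => A.pathTarget A.root l.1
  e := fun x => x.1.2
  root_eq := rfl
  s_eq := fun x => x.2
  t_eq := fun x => by
    show A.t x.1.2 = A.pathTarget A.root (x.1.1.1 ++ [x.1.2])
    simp

/-- The morphism induced between universal covering trees by a morphism of graphs. -/
def GraphHom.coverMap {A B : RGraph} (p : GraphHom A B) : GraphHom A.cover B.cover where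
  v := fun l => ⟨l.1.map p.e, by have := p.pathFrom_map l.2; rwa [p.root_eq] at this⟩
  e := fun x =>
    ⟨(⟨x.1.1.1.map p.e, by have := p.pathFrom_map x.1.1.2; rwa [p.root_eq] at this⟩,
      p.e x.1.2), by
        show B.s (p.e x.1.2) = B.pathTarget B.root (x.1.1.1.map p.e)
        rw [p.s_eq, x.2, ← p.root_eq, p.pathTarget_map]⟩
  root_eq := Subtype.ext rfl
  s_eq := fun _ => rfl
  t_eq := fun x => by
    apply Subtype.ext
    simp [RGraph.cover]

/-- `A` is a covering quotient of `T`. -/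
def IsCovQuotient (T A : RGraph) : Prop := ∃ p : GraphHom T A, p.IsCovering

/-- `A` is a minimal covering quotient of `T`: a covering quotient with the minimal
number of vertices among all covering quotients of `T`. -/
def IsMinCovQuotient (T A : RGraph) : Prop :=
  IsCovQuotient T A ∧
    ∀ B : RGraph, IsCovQuotient T B → Cardinal.mk A.V ≤ Cardinal.mk B.V

/-- `T` has finitely many cone types. -/
def FinManyCones (T : RGraph) : Prop :=
  ∃ S : Set T.V, S.Finite ∧ ∀ v : T.V, ∃ w ∈ S, RGraph.Iso (T.subgraph v) (T.subgraph w)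

/-- A self-similar tree: a locally finite tree with finitely many cone types. -/
def SelfSimilarTree (T : RGraph) : Prop := T.IsTree ∧ T.LocallyFinite ∧ FinManyCones T

namespace RGraph

/-- The automorphism group of a graph, realized as the group of root-preserving,
adjacency-preserving permutations of the vertex set (for trees this is the same as the
automorphism group in the sense of graph morphisms, since in a tree an edge is determined
by its endpoints). -/
def autGroup (T : RGraph) : Subgroup (Equiv.Perm T.V) where
  carrier := {g | g T.root = T.root ∧ ∀ v w, T.Adj v w ↔ T.Adj (g v) (g w)}
  one_mem' := ⟨rfl, fun _ _ => Iff.rfl⟩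
  mul_mem' := by
    rintro a b ⟨ha1, ha2⟩ ⟨hb1, hb2⟩
    refine ⟨?_, fun v w => ?_⟩
    · show a (b T.root) = T.root
      rw [hb1, ha1]
    · exact (hb2 v w).trans (ha2 (b v) (b w))
  inv_mem' := by
    rintro a ⟨ha1, ha2⟩
    refine ⟨?_, fun v w => ?_⟩
    · show a.symm T.root = T.root
      rw [Equiv.symm_apply_eq]
      exact ha1.symm
    · have h := ha2 (a⁻¹ v) (a⁻¹ w)
      simpa using h.symm

/-- The subgroup of permutations of the vertices fixing every vertex outside
of the cone at `v`. -/
def fixOutside (T : RGraph) (v : T.V) : Subgroup (Equiv.Perm T.V) where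
  carrier := {g | ∀ w, ¬ T.Reach v w → g w = w}
  one_mem' := fun _ _ => rfl
  mul_mem' := by
    intro a b ha hb w hw
    show a (b w) = w
    rw [hb w hw, ha w hw]
  inv_mem' := by
    intro a ha w hw
    show a.symm w = w
    rw [Equiv.symm_apply_eq]
    exact (ha w hw).symm

/-- The rigid stabilizer of the vertex `v`: automorphisms fixing every vertex
outside the subtree spanned by `v` and its descendants. -/
def rist (T : RGraph) (v : T.V) : Subgroup (Equiv.Perm T.V) :=
  T.autGroup ⊓ T.fixOutside v

/-- The set of vertices at distance `n` from the root. -/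
def level (T : RGraph) (n : ℕ) : Set T.V :=
  {v | ∃ l : List T.E, T.PathFrom T.root l ∧ T.pathTarget T.root l = v ∧ l.length = n}

/-- The `n`-th rigid level stabilizer: the subgroup generated by the rigid stabilizers
of the vertices at distance `n` from the root. -/
def ristLevel (T : RGraph) (n : ℕ) : Subgroup (Equiv.Perm T.V) :=
  ⨆ v ∈ T.level n, T.rist v

/-- The `n`-th rigid level stabilizer, as a subgroup of the automorphism group. -/
def ristIn (T : RGraph) (n : ℕ) : Subgroup ↥T.autGroup :=
  (T.ristLevel n).comap T.autGroup.subtype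

end RGraph

/-- A recurrent double edge: a pair of distinct parallel edges such that there is an
oriented loop which contains one of them, or from which their common source can be
reached. -/
def HasRecDoubleEdge (A : RGraph) : Prop :=
  ∃ e₁ e₂ : A.E, e₁ ≠ e₂ ∧ A.s e₁ = A.s e₂ ∧ A.t e₁ = A.t e₂ ∧
    ((∃ (q : A.V) (l : List A.E),
        A.PathFrom q l ∧ l ≠ [] ∧ A.pathTarget q l = q ∧ (e₁ ∈ l ∨ e₂ ∈ l)) ∨
     (∃ (q : A.V) (l : List A.E),
        A.PathFrom q l ∧ l ≠ [] ∧ A.pathTarget q l = q ∧ A.Reach q (A.s e₁)))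

/-- A deterministic finite automaton over the alphabet `A`, with a partial transition
function, a single initial state, and all states accepting. -/
structure PDFA (A : Type) where
  Q : Type
  finQ : Finite Q
  neQ : Nonempty Q
  δ : Q → A → Option Q
  init : Q

namespace PDFA

variable {A : Type} (M : PDFA A)

/-- Running the automaton from state `q` on a word; `none` if it gets stuck. -/
def run : M.Q → List A → Option M.Q
  | q, [] => some q
  | q, a :: w => (M.δ q a).bind fun q' => run q' w

/-- The regular language accepted by `M`. -/
def Lang : Set (List A) := {w | (M.run M.init w).isSome}

lemma run_append (q : M.Q) (u w : List A) :
    M.run q (u ++ w) = (M.run q u).bind fun q' => M.run q' w := by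
  induction u generalizing q with
  | nil => simp [run]
  | cons a u ih =>
    simp only [List.cons_append, run]
    cases M.δ q a with
    | none => simp
    | some q' => simp [ih]

lemma isSome_of_append {q : M.Q} {u w : List A}
    (h : (M.run q (u ++ w)).isSome) : (M.run q u).isSome := by
  rw [run_append] at h
  cases hu : M.run q u with
  | none => rw [hu] at h; simp at h
  | some q' => simp

/-- The path language tree of `M`: the tree whose vertices are the words of the
language of `M`, with an edge from `w` to `w ++ [a]` whenever both belong to the
language. -/
def pathTree : RGraph where
  V := {w : List A // (M.run M.init w).isSome}
  E := {x : List A × A // (M.run M.init (x.1 ++ [x.2])).isSome}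
  s := fun x => ⟨x.1.1, M.isSome_of_append x.2⟩
  t := fun x => ⟨x.1.1 ++ [x.1.2], x.2⟩
  root := ⟨[], by simp [run]⟩

/-- The underlying rooted directed multigraph of the automaton `M`. -/
def underlying : RGraph where
  V := M.Q
  E := {x : M.Q × A // (M.δ x.1 x.2).isSome}
  s := fun x => x.1.1
  t := fun x => (M.δ x.1.1 x.1.2).get x.2
  root := M.init

/-- `M` is geometrically minimal: it has the minimal number of states among all DFAs
(over arbitrary finite nonempty alphabets) whose path language trees are isomorphic,
as unlabelled rooted trees, to the path language tree of `M`. -/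
def GeomMinimal : Prop :=
  ∀ (B : Type), Finite B → Nonempty B → ∀ N : PDFA B,
    RGraph.Iso M.pathTree N.pathTree → Nat.card M.Q ≤ Nat.card N.Q

/-- The state reached after reading the word `w` of the language. -/
def qstate (w : List A) (h : (M.run M.init w).isSome) : M.Q :=
  (M.run M.init w).get h

/-- The group of admissible permutations at the state `q`: permutations `τ` of the
alphabet fixing the letters outside `Σ(q)` and satisfying `δ(q, τ a) = δ(q, a)`. -/
def SymQ (q : M.Q) : Subgroup (Equiv.Perm A) where
  carrier := {τ | ∀ a, M.δ q (τ a) = M.δ q a ∧ (M.δ q a = none → τ a = a)}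
  one_mem' := fun _ => ⟨rfl, fun _ => rfl⟩
  mul_mem' := by
    intro τ₁ τ₂ h1 h2 a
    constructor
    · show M.δ q (τ₁ (τ₂ a)) = M.δ q a
      rw [(h1 (τ₂ a)).1, (h2 a).1]
    · intro hn
      show τ₁ (τ₂ a) = a
      rw [(h2 a).2 hn, (h1 a).2 hn]
  inv_mem' := by
    intro τ h a
    have h1 := (h (τ.symm a)).1
    rw [Equiv.apply_symm_apply] at h1
    constructor
    · show M.δ q (τ.symm a) = M.δ q a
      exact h1.symm
    · intro hn
      have h2 := (h (τ.symm a)).2 (h1.symm.trans hn)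
      rw [Equiv.apply_symm_apply] at h2
      show τ.symm a = a
      exact h2.symm

end PDFA

/-- Extending a portrait to a map on words (the first argument is the accumulated
prefix): the `i`-th letter of the image word is the image of the `i`-th letter under
the local injection at the prefix of length `i - 1`. -/
def portraitExtend {A : Type} (σ : List A → A → A) : List A → List A → List A
  | _, [] => []
  | pre, a :: w => σ pre a :: portraitExtend σ (pre ++ [a]) w

/-!
Two vertices of the tree `T` with the same image under a covering `T → B` have isomorphic cones:
each cone is the universal cover of `B` based at that image. Hence `T → B` is followed by a
covering `B → T.coneGraph` onto the finite graph of cone types. For a minimal covering quotient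
`Abar` this covering is injective on vertices, as `T.coneGraph` is itself a finite covering
quotient of `T`. So the fibres of `T → A` lie in those of `T → Abar`, and `T → A` descends to a
covering `A → Abar`.
-/

open Function

namespace RGraph

variable {A : RGraph}

theorem pathFrom_cons {q : A.V} {e : A.E} {l : List A.E} :
    A.PathFrom q (e :: l) ↔ A.s e = q ∧ A.PathFrom (A.t e) l := by
  constructor
  · rintro ⟨h, hs⟩
    obtain ⟨h₁, h₂⟩ := List.isChain_cons.1 h
    exact ⟨hs e rfl, h₂, fun f hf => (h₁ f hf).symm⟩
  · rintro ⟨hs, h₂, h₁⟩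
    refine ⟨List.isChain_cons.2 ⟨fun f hf => (h₁ f hf).symm, h₂⟩, ?_⟩
    rintro f ⟨⟩
    exact hs

theorem pathFrom_append {q : A.V} {l₁ l₂ : List A.E} :
    A.PathFrom q (l₁ ++ l₂) ↔
      A.PathFrom q l₁ ∧ A.PathFrom (A.pathTarget q l₁) l₂ := by
  induction l₁ generalizing q with
  | nil => exact ⟨fun h => ⟨A.pathFrom_nil q, h⟩, And.right⟩
  | cons e l ih => simp only [List.cons_append, pathFrom_cons, ih, pathTarget_cons, and_assoc]

theorem IsTree.eq_of_pathTarget_eq (hA : A.IsTree) {q : A.V} {l₁ l₂ : List A.E}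
    (h₁ : A.PathFrom q l₁) (h₂ : A.PathFrom q l₂)
    (h : A.pathTarget q l₁ = A.pathTarget q l₂) : l₁ = l₂ := by
  obtain ⟨⟨l, hl⟩, rfl⟩ := hA.2 q
  have key := @hA.1 ⟨l ++ l₁, pathFrom_append.2 ⟨hl, h₁⟩⟩
    ⟨l ++ l₂, pathFrom_append.2 ⟨hl, h₂⟩⟩ (by simp only [pathTarget_append, h])
  exact List.append_cancel_left (congrArg Subtype.val key)

def reroot (A : RGraph) (a : A.V) : RGraph := { A with root := a }

end RGraph

namespace GraphHom

variable {A B C : RGraph}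

protected def id (A : RGraph) : GraphHom A A := ⟨id, id, rfl, fun _ => rfl, fun _ => rfl⟩

def comp (g : GraphHom B C) (f : GraphHom A B) : GraphHom A C where
  v := g.v ∘ f.v
  e := g.e ∘ f.e
  root_eq := by simp only [comp_apply, f.root_eq, g.root_eq]
  s_eq x := by simp only [comp_apply, g.s_eq, f.s_eq]
  t_eq x := by simp only [comp_apply, g.t_eq, f.t_eq]

noncomputable def IsIso.inv {f : GraphHom A B} (hf : f.IsIso) : GraphHom B A where
  v := (Equiv.ofBijective f.v hf.1).symm
  e := (Equiv.ofBijective f.e hf.2).symm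
  root_eq := (Equiv.symm_apply_eq _).2 f.root_eq.symm
  s_eq x := hf.1.1 <| by
    rw [← f.s_eq, Equiv.ofBijective_apply_symm_apply f.e hf.2,
      Equiv.ofBijective_apply_symm_apply f.v hf.1]
  t_eq x := hf.1.1 <| by
    rw [← f.t_eq, Equiv.ofBijective_apply_symm_apply f.e hf.2,
      Equiv.ofBijective_apply_symm_apply f.v hf.1]

theorem IsIso.inv_isIso {f : GraphHom A B} (hf : f.IsIso) : hf.inv.IsIso :=
  ⟨(Equiv.ofBijective f.v hf.1).symm.bijective, (Equiv.ofBijective f.e hf.2).symm.bijective⟩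

end GraphHom

namespace RGraph

theorem Iso.refl (A : RGraph) : A.Iso A :=
  ⟨GraphHom.id A, bijective_id, bijective_id⟩

theorem Iso.symm {A B : RGraph} (h : A.Iso B) : B.Iso A :=
  let ⟨_, hf⟩ := h
  ⟨hf.inv, hf.inv_isIso⟩

theorem Iso.trans {A B C : RGraph} (h₁ : A.Iso B) (h₂ : B.Iso C) : A.Iso C :=
  let ⟨f, hf⟩ := h₁
  let ⟨g, hg⟩ := h₂
  ⟨g.comp f, hg.1.comp hf.1, hg.2.comp hf.2⟩

end RGraph

namespace GraphHom

variable {A B : RGraph} (p : GraphHom A B)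

def UniqueEdgeLifting : Prop :=
  ∀ q f, B.s f = p.v q → ∃! e, A.s e = q ∧ p.e e = f

theorem uplp_iff_uniqueEdgeLifting : p.UPLP ↔ p.UniqueEdgeLifting := by
  constructor
  · intro hp q f hf
    obtain ⟨l, ⟨hl, hlf⟩, hu⟩ :=
      hp q [f] (RGraph.pathFrom_cons.2 ⟨hf, B.pathFrom_nil _⟩)
    obtain ⟨e, rfl, rfl⟩ := List.map_eq_singleton_iff.1 hlf
    refine ⟨e, ⟨(RGraph.pathFrom_cons.1 hl).1, rfl⟩, fun e' ⟨he', hfe'⟩ => ?_⟩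
    exact List.singleton_injective <|
      hu [e'] ⟨RGraph.pathFrom_cons.2 ⟨he', A.pathFrom_nil _⟩,
        by rw [List.map_singleton, hfe']⟩
  · intro hp q l' hl'
    induction l' generalizing q with
    | nil => exact ⟨[], ⟨A.pathFrom_nil q, rfl⟩, fun l h => List.map_eq_nil_iff.1 h.2⟩
    | cons f l' ih =>
      obtain ⟨hf, hl'⟩ := RGraph.pathFrom_cons.1 hl'
      obtain ⟨e, ⟨hes, rfl⟩, he⟩ := hp q f hf
      obtain ⟨l, ⟨hl, rfl⟩, hu⟩ := ih (A.t e) (by rwa [← p.t_eq])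
      refine ⟨e :: l, ⟨RGraph.pathFrom_cons.2 ⟨hes, hl⟩, rfl⟩, ?_⟩
      rintro (_ | ⟨e', m⟩) ⟨hm, hmf⟩
      · exact absurd hmf (List.cons_ne_nil _ _).symm
      · obtain ⟨hfe, hml⟩ := List.cons.inj hmf
        obtain ⟨hs', hm'⟩ := RGraph.pathFrom_cons.1 hm
        obtain rfl := he e' ⟨hs', hfe⟩
        rw [hu m ⟨hm', hml⟩]

theorem UPLP.uniqueEdgeLifting {p : GraphHom A B} (hp : p.UPLP) : p.UniqueEdgeLifting :=
  (uplp_iff_uniqueEdgeLifting p).1 hp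

section liftEdge

variable {p} (hp : p.UniqueEdgeLifting) {q : A.V} {f : B.E} (hf : B.s f = p.v q)

noncomputable def liftEdge : A.E := (hp q f hf).exists.choose

theorem s_liftEdge : A.s (liftEdge hp hf) = q := (hp q f hf).exists.choose_spec.1

theorem e_liftEdge : p.e (liftEdge hp hf) = f := (hp q f hf).exists.choose_spec.2

theorem eq_liftEdge {e : A.E} (hes : A.s e = q) (hef : p.e e = f) : e = liftEdge hp hf :=
  (hp q f hf).unique ⟨hes, hef⟩ ⟨s_liftEdge hp hf, e_liftEdge hp hf⟩

end liftEdge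

noncomputable def pathEquiv (hp : p.UPLP) (q : A.V) :
    {l // A.PathFrom q l} ≃ {l' // B.PathFrom (p.v q) l'} :=
  Equiv.ofBijective (fun l => ⟨l.1.map p.e, p.pathFrom_map l.2⟩)
    ⟨fun l₁ l₂ h => Subtype.ext <| (hp q _ (p.pathFrom_map l₁.2)).unique ⟨l₁.2, rfl⟩
        ⟨l₂.2, (congrArg Subtype.val h).symm⟩,
     fun l' => let ⟨l, hl, hm⟩ := (hp q l'.1 l'.2).exists; ⟨⟨l, hl⟩, Subtype.ext hm⟩⟩

theorem pathEquiv_apply_coe (hp : p.UPLP) {q : A.V} (l : {l // A.PathFrom q l}) :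
    (p.pathEquiv hp q l).1 = l.1.map p.e := rfl

theorem map_pathEquiv_symm (hp : p.UPLP) {q : A.V} (l' : {l' // B.PathFrom (p.v q) l'}) :
    ((p.pathEquiv hp q).symm l').1.map p.e = l'.1 :=
  congrArg Subtype.val ((p.pathEquiv hp q).apply_symm_apply l')

theorem exists_reach_of_uplp (hp : p.UPLP) {q : A.V} {w' : B.V} (h : B.Reach (p.v q) w') :
    ∃ w, A.Reach q w ∧ p.v w = w' := by
  obtain ⟨l', hl', rfl⟩ := h
  obtain ⟨l, hl, rfl⟩ := (hp q l' hl').exists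
  exact ⟨_, ⟨l, hl, rfl⟩, (p.pathTarget_map q l).symm⟩

theorem isIso_iff : p.IsIso ↔ Bijective p.v ∧ p.UniqueEdgeLifting := by
  constructor
  · rintro ⟨hv, he⟩
    refine ⟨hv, fun q f hf => ?_⟩
    obtain ⟨e, rfl⟩ := he.2 f
    exact ⟨e, ⟨hv.1 (by rw [← p.s_eq, hf]), rfl⟩, fun e' h => he.1 h.2⟩
  · rintro ⟨hv, hp⟩
    refine ⟨hv, fun e₁ e₂ h => ?_, fun f => ?_⟩
    · have hs : A.s e₁ = A.s e₂ := hv.1 (by rw [← p.s_eq, ← p.s_eq, h])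
      exact (hp _ _ (p.s_eq e₂)).unique ⟨hs, h⟩ ⟨rfl, rfl⟩
    · obtain ⟨q, hq⟩ := hv.2 (B.s f)
      obtain ⟨e, ⟨-, he⟩, -⟩ := hp q f hq.symm
      exact ⟨e, he⟩

def restrict (x : A.V) : GraphHom (A.subgraph x) (B.subgraph (p.v x)) where
  v u := ⟨p.v u.1, p.reach_map u.2⟩
  e e := ⟨p.e e.1, by rw [p.s_eq]; exact p.reach_map e.2⟩
  root_eq := rfl
  s_eq e := Subtype.ext (p.s_eq e.1)
  t_eq e := Subtype.ext (p.t_eq e.1)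

theorem UniqueEdgeLifting.restrict {p : GraphHom A B} (hp : p.UniqueEdgeLifting) (x : A.V) :
    (p.restrict x).UniqueEdgeLifting := by
  rintro ⟨u, hu⟩ ⟨f, hf⟩ hfu
  obtain ⟨e, ⟨hes, rfl⟩, he⟩ := hp u f (congrArg Subtype.val hfu)
  exact ⟨⟨e, hes ▸ hu⟩, ⟨Subtype.ext hes, rfl⟩,
    fun e' ⟨he's, he'f⟩ =>
      Subtype.ext (he _ ⟨congrArg Subtype.val he's, congrArg Subtype.val he'f⟩)⟩

theorem isIso_restrict {p : GraphHom A B} (hp : p.UniqueEdgeLifting) (hinj : Injective p.v)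
    (x : A.V) : (p.restrict x).IsIso := by
  refine (isIso_iff _).2
    ⟨⟨fun u w h => Subtype.ext (hinj (congrArg Subtype.val h)), ?_⟩, hp.restrict x⟩
  rintro ⟨w', hw'⟩
  obtain ⟨w, hw, rfl⟩ := p.exists_reach_of_uplp ((uplp_iff_uniqueEdgeLifting p).2 hp) hw'
  exact ⟨⟨w, hw⟩, rfl⟩

end GraphHom

namespace RGraph

variable {A : RGraph}

def subgraphIncl (A : RGraph) (t : A.V) : GraphHom (A.subgraph t) (A.reroot t) where
  v := Subtype.val
  e := Subtype.val
  root_eq := rfl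
  s_eq _ := rfl
  t_eq _ := rfl

theorem uniqueEdgeLifting_subgraphIncl (t : A.V) : (A.subgraphIncl t).UniqueEdgeLifting := by
  rintro ⟨u, hu⟩ f (hf : A.s f = u)
  exact ⟨⟨f, hf ▸ hu⟩, ⟨Subtype.ext hf, rfl⟩, fun e ⟨_, he⟩ => Subtype.ext he⟩

theorem subgraph_subgraph_iso {t : A.V} (w : (A.subgraph t).V) :
    ((A.subgraph t).subgraph w).Iso (A.subgraph w.1) :=
  ⟨(A.subgraphIncl t).restrict w,
    GraphHom.isIso_restrict (uniqueEdgeLifting_subgraphIncl t) Subtype.val_injective w⟩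

theorem subgraph_iso_of_isIso {t u : A.V} {f : GraphHom (A.subgraph t) (A.subgraph u)}
    (hf : f.IsIso) (w : (A.subgraph t).V) : (A.subgraph w.1).Iso (A.subgraph (f.v w).1) :=
  (subgraph_subgraph_iso w).symm.trans <|
    .trans ⟨f.restrict w, GraphHom.isIso_restrict ((f.isIso_iff.1 hf).2) hf.1.1 w⟩
      (subgraph_subgraph_iso (f.v w))

def coverAt (B : RGraph) (a : B.V) : RGraph where
  V := {l : List B.E // B.PathFrom a l}
  E := {x : {l : List B.E // B.PathFrom a l} × B.E // B.s x.2 = B.pathTarget a x.1.1}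
  s x := x.1.1
  t x := ⟨x.1.1.1 ++ [x.1.2], RGraph.pathFrom_append_single x.1.1.2 x.2⟩
  root := ⟨[], B.pathFrom_nil a⟩

end RGraph

namespace GraphHom

variable {A B : RGraph} {p : GraphHom A B} (hp : p.UPLP) (t : A.V)

theorem v_pathTarget_pathEquiv_symm (l : {l // B.PathFrom (p.v t) l}) :
    p.v (A.pathTarget t ((p.pathEquiv hp t).symm l).1) = B.pathTarget (p.v t) l.1 := by
  rw [← p.pathTarget_map, map_pathEquiv_symm]

theorem s_snd_eq_v_pathTarget (x : (B.coverAt (p.v t)).E) :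
    B.s x.1.2 = p.v (A.pathTarget t ((p.pathEquiv hp t).symm x.1.1).1) :=
  x.2.trans (v_pathTarget_pathEquiv_symm hp t _).symm

theorem pathEquiv_symm_append (l : {l' // B.PathFrom (p.v t) l'}) {f : B.E}
    (hf : B.s f = p.v (A.pathTarget t ((p.pathEquiv hp t).symm l).1))
    (hlf : B.PathFrom (p.v t) (l.1 ++ [f])) :
    ((p.pathEquiv hp t).symm ⟨l.1 ++ [f], hlf⟩).1 =
      ((p.pathEquiv hp t).symm l).1 ++ [liftEdge hp.uniqueEdgeLifting hf] := by
  have h : (p.pathEquiv hp t).symm ⟨l.1 ++ [f], hlf⟩ =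
      ⟨_, RGraph.pathFrom_append_single ((p.pathEquiv hp t).symm l).2
        (s_liftEdge hp.uniqueEdgeLifting hf)⟩ := by
    rw [Equiv.symm_apply_eq]
    refine Subtype.ext ?_
    rw [pathEquiv_apply_coe, List.map_append, map_pathEquiv_symm, List.map_singleton,
      e_liftEdge]
  exact congrArg Subtype.val h

noncomputable def coverLift : GraphHom (B.coverAt (p.v t)) (A.subgraph t) where
  v l := ⟨A.pathTarget t ((p.pathEquiv hp t).symm l).1, _, ((p.pathEquiv hp t).symm l).2, rfl⟩
  e x := ⟨liftEdge hp.uniqueEdgeLifting (s_snd_eq_v_pathTarget hp t x),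
    by rw [s_liftEdge]; exact ⟨_, ((p.pathEquiv hp t).symm x.1.1).2, rfl⟩⟩
  root_eq := by
    have h : (p.pathEquiv hp t).symm ⟨[], B.pathFrom_nil _⟩ = ⟨[], A.pathFrom_nil t⟩ :=
      (Equiv.symm_apply_eq _).2 rfl
    exact Subtype.ext (congrArg (A.pathTarget t ∘ Subtype.val) h)
  s_eq x :=
    Subtype.ext (s_liftEdge hp.uniqueEdgeLifting (s_snd_eq_v_pathTarget hp t x))
  t_eq x := Subtype.ext <| by
    show A.t (liftEdge hp.uniqueEdgeLifting (s_snd_eq_v_pathTarget hp t x)) =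
      A.pathTarget t ((p.pathEquiv hp t).symm ⟨x.1.1.1 ++ [x.1.2], _⟩).1
    rw [pathEquiv_symm_append hp t x.1.1 (s_snd_eq_v_pathTarget hp t x),
      RGraph.pathTarget_append_single]

theorem isIso_coverLift (hA : A.IsTree) : (coverLift hp t).IsIso := by
  refine (isIso_iff _).2 ⟨⟨fun l₁ l₂ h => ?_, ?_⟩, ?_⟩
  · exact (p.pathEquiv hp t).symm.injective <| Subtype.ext <|
      hA.eq_of_pathTarget_eq (Subtype.prop _) (Subtype.prop _) (congrArg Subtype.val h)
  · rintro ⟨w, l, hl, rfl⟩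
    refine ⟨p.pathEquiv hp t ⟨l, hl⟩, Subtype.ext ?_⟩
    simp only [coverLift, Equiv.symm_apply_apply]
  · rintro (l : {l // B.PathFrom (p.v t) l}) E hE
    have hEs : A.s E.1 = A.pathTarget t ((p.pathEquiv hp t).symm l).1 :=
      congrArg Subtype.val hE
    have hsE : B.s (p.e E.1) = B.pathTarget (p.v t) l.1 := by
      rw [p.s_eq, hEs, v_pathTarget_pathEquiv_symm]
    refine ⟨⟨(l, p.e E.1), hsE⟩, ⟨rfl, Subtype.ext ?_⟩, ?_⟩
    · exact
        (eq_liftEdge hp.uniqueEdgeLifting (s_snd_eq_v_pathTarget hp t ⟨_, hsE⟩) hEs rfl).symm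
    · rintro ⟨⟨l', f⟩, hf⟩ ⟨rfl, hx⟩
      have hfE := congrArg (p.e ∘ Subtype.val) hx
      simp only [comp_apply, coverLift, e_liftEdge] at hfE
      subst hfE
      rfl

end GraphHom

theorem RGraph.IsTree.subgraph_iso_of_v_eq {T B : RGraph} (hT : T.IsTree) {p : GraphHom T B}
    (hp : p.UPLP) {t t' : T.V} (h : p.v t = p.v t') : (T.subgraph t).Iso (T.subgraph t') := by
  have key (s : T.V) : (B.coverAt (p.v s)).Iso (T.subgraph s) :=
    ⟨_, GraphHom.isIso_coverLift hp s hT⟩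
  have h' := key t'
  rw [← h] at h'
  exact (key t).symm.trans h'

namespace RGraph

variable (T : RGraph)

def coneSetoid : Setoid T.V where
  r v w := (T.subgraph v).Iso (T.subgraph w)
  iseqv := ⟨fun _ => Iso.refl _, Iso.symm, Iso.trans⟩

/-- The edges leaving a cone type are the edges of `T` leaving its chosen representative. -/
def coneGraph : RGraph where
  V := Quotient T.coneSetoid
  E := {e : T.E // (Quotient.mk T.coneSetoid (T.s e)).out = T.s e}
  s e := Quotient.mk _ (T.s e.1)
  t e := Quotient.mk _ (T.t e.1)
  root := Quotient.mk _ T.root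

noncomputable def coneIso (t : T.V) :
    GraphHom (T.subgraph t) (T.subgraph (Quotient.mk T.coneSetoid t).out) :=
  (Iso.symm (Quotient.mk_out (s := T.coneSetoid) t)).choose

theorem isIso_coneIso (t : T.V) : (T.coneIso t).IsIso :=
  (Iso.symm (Quotient.mk_out (s := T.coneSetoid) t)).choose_spec

theorem s_coneIso_e (e : T.E) :
    T.s ((T.coneIso (T.s e)).e ⟨e, T.reach_self _⟩).1 =
      (Quotient.mk T.coneSetoid (T.s e)).out :=
  congrArg Subtype.val
    (((T.coneIso (T.s e)).s_eq ⟨e, T.reach_self _⟩).trans (T.coneIso (T.s e)).root_eq)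

noncomputable def coneHom : GraphHom T T.coneGraph where
  v := Quotient.mk _
  e e := ⟨((T.coneIso (T.s e)).e ⟨e, T.reach_self _⟩).1,
    by rw [s_coneIso_e, Quotient.out_eq]⟩
  root_eq := rfl
  s_eq e := by
    show Quotient.mk _ (T.s _) = Quotient.mk _ (T.s e)
    rw [s_coneIso_e, Quotient.out_eq]
  t_eq e := by
    show Quotient.mk _ (T.t _) = Quotient.mk _ (T.t e)
    have h : T.t ((T.coneIso (T.s e)).e ⟨e, T.reach_self _⟩).1 =
        ((T.coneIso (T.s e)).v ((T.subgraph (T.s e)).t ⟨e, T.reach_self _⟩)).1 :=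
      congrArg Subtype.val ((T.coneIso (T.s e)).t_eq _)
    rw [h]
    exact Quotient.sound (subgraph_iso_of_isIso (T.isIso_coneIso _) _).symm

theorem coneHom_e_coe {e : T.E} {t : T.V} (he : T.s e = t) :
    (T.coneHom.e e).1 = ((T.coneIso t).e ⟨e, he ▸ T.reach_self _⟩).1 := by
  subst he
  rfl

theorem isCovering_coneHom : T.coneHom.IsCovering := by
  refine ⟨Quotient.mk_surjective, (GraphHom.uplp_iff_uniqueEdgeLifting _).2 fun t F hF => ?_⟩
  have hφ := T.isIso_coneIso t
  have hF' : T.s F.1 = (Quotient.mk T.coneSetoid t).out := by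
    rw [← F.2]
    exact congrArg Quotient.out hF
  obtain ⟨E, hE⟩ := hφ.2.2 ⟨F.1, hF' ▸ T.reach_self _⟩
  have hEs : T.s E.1 = t := by
    refine congrArg Subtype.val
      (hφ.1.1 (a₁ := (T.subgraph t).s E) (a₂ := (T.subgraph t).root) ?_)
    rw [← (T.coneIso t).s_eq, hE, (T.coneIso t).root_eq]
    exact Subtype.ext hF'
  refine ⟨E.1, ⟨hEs, Subtype.ext ?_⟩, fun e ⟨he, heF⟩ => ?_⟩
  · rw [T.coneHom_e_coe hEs]
    exact congrArg Subtype.val hE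
  · have h : ((T.coneIso t).e ⟨e, he ▸ T.reach_self _⟩).1 = ((T.coneIso t).e E).1 :=
      (T.coneHom_e_coe he).symm.trans
        ((congrArg Subtype.val heF).trans (congrArg Subtype.val hE).symm)
    exact congrArg Subtype.val (hφ.2.1 (Subtype.ext h))

theorem finite_coneGraph_v (h : FinManyCones T) : Finite T.coneGraph.V := by
  obtain ⟨S, hS, hall⟩ := h
  have := hS.to_subtype
  refine Finite.of_surjective (fun s : S => Quotient.mk T.coneSetoid s.1) ?_
  rintro ⟨v⟩
  obtain ⟨w, hw, hvw⟩ := hall v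
  exact ⟨⟨w, hw⟩, Quotient.sound hvw.symm⟩

end RGraph

theorem RGraph.IsTree.coneHom_v_eq_of_v_eq {T B : RGraph} (hT : T.IsTree) {p : GraphHom T B}
    (hp : p.UPLP) {t t' : T.V} (h : p.v t = p.v t') : T.coneHom.v t = T.coneHom.v t' :=
  Quotient.sound (hT.subgraph_iso_of_v_eq hp h)

namespace GraphHom

variable {T B C : RGraph} (π : GraphHom T B) (hπ : π.IsCovering) (κ : GraphHom T C)
  (hκ : ∀ t t', π.v t = π.v t' → κ.v t = κ.v t')

noncomputable def descend : GraphHom B C where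
  v b := κ.v (surjInv hπ.1 b)
  e f := κ.e (liftEdge hπ.2.uniqueEdgeLifting (surjInv_eq hπ.1 (B.s f)).symm)
  root_eq := by
    rw [← κ.root_eq]
    exact hκ _ _ (by rw [surjInv_eq hπ.1, π.root_eq])
  s_eq f := by rw [κ.s_eq, s_liftEdge]
  t_eq f := by
    rw [κ.t_eq]
    exact hκ _ _ (by rw [← π.t_eq, e_liftEdge, surjInv_eq hπ.1])

theorem descend_v_apply (t : T.V) : (π.descend hπ κ hκ).v (π.v t) = κ.v t :=
  hκ _ _ (surjInv_eq hπ.1 _)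

theorem descend_e_of_s_eq {f : B.E} {b : B.V} (hfb : B.s f = b) :
    (π.descend hπ κ hκ).e f =
      κ.e (liftEdge hπ.2.uniqueEdgeLifting (q := surjInv hπ.1 b)
        (by rw [hfb, surjInv_eq hπ.1])) := by
  subst hfb
  rfl

theorem isCovering_descend (hκc : κ.IsCovering) : (π.descend hπ κ hκ).IsCovering := by
  refine ⟨fun c => ?_, (uplp_iff_uniqueEdgeLifting _).2 fun b f hf => ?_⟩
  · obtain ⟨t, rfl⟩ := hκc.1 c
    exact ⟨π.v t, π.descend_v_apply hπ κ hκ t⟩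
  · have hq : π.v (surjInv hπ.1 b) = b := surjInv_eq hπ.1 b
    obtain ⟨e, ⟨hes, rfl⟩, he⟩ := hκc.2.uniqueEdgeLifting _ f hf
    have hfb : B.s (π.e e) = b := by rw [π.s_eq, hes, hq]
    refine ⟨π.e e, ⟨hfb, ?_⟩, fun f' ⟨hf'b, hf'⟩ => ?_⟩
    · rw [descend_e_of_s_eq π hπ κ hκ hfb, ← eq_liftEdge _ _ hes rfl]
    · rw [descend_e_of_s_eq π hπ κ hκ hf'b] at hf'
      rw [← he _ ⟨s_liftEdge _ _, hf'⟩, e_liftEdge]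

end GraphHom

universe u

theorem Function.Surjective.injective_of_mk_le {α β : Type u} [Finite β] {f : α → β}
    (hf : Surjective f) (h : Cardinal.mk α ≤ Cardinal.mk β) : Injective f :=
  have : Finite α := Cardinal.mk_lt_aleph0_iff.1 (h.trans_lt (Cardinal.lt_aleph0_of_finite β))
  (hf.bijective_of_nat_card_le (Cardinal.toNat_le_toNat h (Cardinal.lt_aleph0_of_finite β) :)).1

/-- If `T` is a self-similar tree, `A` is a covering quotient of `T`
and `Ā` is a minimal covering quotient of `T`, then there exists a covering morphism
`p : A → Ā`. -/
theorem stmt8 (T : RGraph) (hT : SelfSimilarTree T) (A Abar : RGraph)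
    (hA : IsCovQuotient T A) (hAbar : IsMinCovQuotient T Abar) :
    ∃ p : GraphHom A Abar, p.IsCovering := by
  obtain ⟨hTree, -, hcones⟩ := hT
  obtain ⟨πA, hπA⟩ := hA
  obtain ⟨⟨π, hπ⟩, hmin⟩ := hAbar
  have := T.finite_coneGraph_v hcones
  have hinj : Injective (π.descend hπ T.coneHom fun _ _ => hTree.coneHom_v_eq_of_v_eq hπ.2).v :=
    (π.isCovering_descend hπ _ _ T.isCovering_coneHom).1.injective_of_mk_le
      (hmin _ ⟨_, T.isCovering_coneHom⟩)
  refine ⟨πA.descend hπA π fun t t' h => hinj ?_, πA.isCovering_descend hπA π _ hπ⟩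
  rw [GraphHom.descend_v_apply, GraphHom.descend_v_apply]
  exact hTree.coneHom_v_eq_of_v_eq hπA.2 h
end

section
/- Let 𝒜 = (Q, δ, ε) be a geometrically minimal DFA over Σ with language ℒ and path language tree T, and let n ∈ ℕ₀. Let Sym(n) := ∏_{v∈ℒ, |v|=n} Sym(q(v)). Then: for every g ∈ Rist(n) and every v ∈ ℒ of length n, the local injection ᵛσ(g) lies in Sym(q(v)); the map σₙ : Rist(n) → Sym(n), g ↦ (ᵛσ(g))_{v∈ℒ, |v|=n}, is a surjective group homomorphism with kernel Rist(n+1); and σₙ admits a group-theoretic section. In particular the sequence 1 → Rist(n+1) → Rist(n) → Sym(n) → 1 is split exact, so Rist(n) is a semidirect product of Sym(n) with Rist(n+1). -/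
/-!
A bisimulation up to relabelling of letters between two automata yields an isomorphism of their
path language trees, built letter by letter along the runs. If two distinct states of a
geometrically minimal automaton were bisimilar, merging one into the other would keep the path
language tree and lose a state. An automorphism `g` makes the states at `x` and at `g x`
bisimilar, so automorphisms preserve states; hence the local permutations of an element of
`Rist(n)` at the words `v` of length `n` lie in `Sym(q(v))`. Conversely a family of such
permutations, applied to the `n`-th letter of every word, is an automorphism fixing the ball of
radius `n`: this is the section. Finally, as the alphabet is finite, `Rist(n)` is exactly the
pointwise stabiliser of the ball of radius `n`, which identifies the kernel of `σₙ` with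
`Rist(n + 1)`.
-/

lemma List.modify_append_singleton {α : Type*} (f : α → α) (l : List α) (c : α) (n : ℕ) :
    (l ++ [c]).modify n f = l.modify n f ++ [if n = l.length then f c else c] := by
  induction l generalizing n with
  | nil => cases n <;> simp
  | cons b l ih => cases n <;> simp [ih]

namespace PDFA

variable {A : Type}

section Bisimulation

variable {M N : PDFA A}

/-- `Σ(q)` in the paper. -/
def letters (M : PDFA A) (q : M.Q) : Set A := {a | (M.δ q a).isSome}

lemma run_cons (q : M.Q) (a : A) (w : List A) :
    M.run q (a :: w) = (M.δ q a).bind fun q' => M.run q' w := rfl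

lemma run_snoc (q : M.Q) (w : List A) (a : A) :
    M.run q (w ++ [a]) = (M.run q w).bind fun q' => M.δ q' a := by
  rw [run_append]
  congr 1
  funext q'
  simp only [run]
  cases M.δ q' a <;> rfl

lemma isSome_run_cons {q : M.Q} {a : A} {w : List A} :
    (M.run q (a :: w)).isSome ↔ ∃ q', M.δ q a = some q' ∧ (M.run q' w).isSome := by
  cases h : M.δ q a <;> simp [run_cons, h]

/-- A bisimulation up to relabelling of letters. -/
def IsBisim (R : M.Q → N.Q → Prop) : Prop :=
  ∀ p r, R p r → ∃ σ : A → A, Set.BijOn σ (M.letters p) (N.letters r) ∧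
    ∀ a p' r', M.δ p a = some p' → N.δ r (σ a) = some r' → R p' r'

lemma IsBisim.reflTransGen {R : M.Q → M.Q → Prop} (hR : IsBisim R) :
    IsBisim (Relation.ReflTransGen R) := by
  intro p r h
  induction h with
  | refl =>
    refine ⟨id, Set.bijOn_id _, fun a p' r' hp hr => ?_⟩
    rw [id, hp, Option.some_inj] at hr
    rw [hr]
  | tail _ hsr ih =>
    obtain ⟨σ₁, hσ₁, hsucc₁⟩ := ih
    obtain ⟨σ₂, hσ₂, hsucc₂⟩ := hR _ _ hsr
    refine ⟨σ₂ ∘ σ₁, hσ₂.comp hσ₁, fun a p' r' hp hr => ?_⟩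
    obtain ⟨s', hs'⟩ :=
      Option.isSome_iff_exists.mp (hσ₁.mapsTo (Option.isSome_of_eq_some hp))
    exact .tail (hsucc₁ a p' s' hp hs') (hsucc₂ _ s' r' hs' hr)

namespace IsBisim

variable {R : M.Q → N.Q → Prop} (hR : IsBisim R)

open scoped Classical in
noncomputable def relabel (p : M.Q) (r : N.Q) : A → A :=
  if h : R p r then (hR p r h).choose else id

lemma relabel_spec {p : M.Q} {r : N.Q} (h : R p r) :
    Set.BijOn (hR.relabel p r) (M.letters p) (N.letters r) ∧
      ∀ a p' r', M.δ p a = some p' → N.δ r (hR.relabel p r a) = some r' → R p' r' := by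
  rw [relabel, dif_pos h]
  exact (hR p r h).choose_spec

noncomputable def wordMap : M.Q → N.Q → List A → List A
  | _, _, [] => []
  | p, r, a :: w => hR.relabel p r a ::
      wordMap ((M.δ p a).getD p) ((N.δ r (hR.relabel p r a)).getD r) w

lemma length_wordMap (p : M.Q) (r : N.Q) (w : List A) : (hR.wordMap p r w).length = w.length := by
  induction w generalizing p r with
  | nil => rfl
  | cons a w ih => simp [wordMap, ih]

lemma wordMap_snoc (p : M.Q) (r : N.Q) (w : List A) (a : A) :
    ∃ b, hR.wordMap p r (w ++ [a]) = hR.wordMap p r w ++ [b] := by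
  induction w generalizing p r with
  | nil => exact ⟨_, rfl⟩
  | cons c w ih =>
    obtain ⟨b, hb⟩ := ih ((M.δ p c).getD p) ((N.δ r (hR.relabel p r c)).getD r)
    exact ⟨b, by simp [wordMap, hb]⟩

lemma wordMap_cons {p p' : M.Q} {r r' : N.Q} {a : A} (hp : M.δ p a = some p')
    (hr : N.δ r (hR.relabel p r a) = some r') (w : List A) :
    hR.wordMap p r (a :: w) = hR.relabel p r a :: hR.wordMap p' r' w := by
  simp [wordMap, hp, hr]

lemma exists_relabel_succ {p p' : M.Q} {r : N.Q} (h : R p r) {a : A} (hp : M.δ p a = some p') :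
    ∃ r', N.δ r (hR.relabel p r a) = some r' ∧ R p' r' := by
  obtain ⟨hbij, hsucc⟩ := hR.relabel_spec h
  obtain ⟨r', hr'⟩ := Option.isSome_iff_exists.mp (hbij.mapsTo (Option.isSome_of_eq_some hp))
  exact ⟨r', hr', hsucc a p' r' hp hr'⟩

lemma run_wordMap {p : M.Q} {r : N.Q} (h : R p r) {w : List A} (hw : (M.run p w).isSome) :
    (N.run r (hR.wordMap p r w)).isSome := by
  induction w generalizing p r with
  | nil => rfl
  | cons a w ih =>
    obtain ⟨p', hp', hw'⟩ := isSome_run_cons.mp hw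
    obtain ⟨r', hr', hpr'⟩ := hR.exists_relabel_succ h hp'
    rw [hR.wordMap_cons hp' hr', run_cons, hr']
    exact ih hpr' hw'

lemma wordMap_injOn {p : M.Q} {r : N.Q} (h : R p r) :
    Set.InjOn (hR.wordMap p r) {w | (M.run p w).isSome} := by
  intro w hw w' hw' heq
  induction w generalizing p r w' with
  | nil =>
    have hlen := congrArg List.length heq
    rw [length_wordMap, length_wordMap] at hlen
    exact (List.length_eq_zero_iff.mp hlen.symm).symm
  | cons a w ih =>
    cases w' with
    | nil => simp [wordMap] at heq
    | cons a' w' =>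
      obtain ⟨p₁, hp₁, hw₁⟩ := isSome_run_cons.mp hw
      obtain ⟨p₂, hp₂, hw₂⟩ := isSome_run_cons.mp hw'
      obtain ⟨r₁, hr₁, hpr₁⟩ := hR.exists_relabel_succ h hp₁
      obtain ⟨r₂, hr₂, -⟩ := hR.exists_relabel_succ h hp₂
      rw [hR.wordMap_cons hp₁ hr₁, hR.wordMap_cons hp₂ hr₂, List.cons.injEq] at heq
      have haa' : a = a' := (hR.relabel_spec h).1.injOn (Option.isSome_of_eq_some hp₁)
        (Option.isSome_of_eq_some hp₂) heq.1
      subst haa'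
      rw [hp₁, Option.some_inj] at hp₂
      rw [← heq.1, hr₁, Option.some_inj] at hr₂
      subst hp₂ hr₂
      rw [ih hpr₁ hw₁ hw₂ heq.2]

lemma wordMap_surjOn {p : M.Q} {r : N.Q} (h : R p r) :
    Set.SurjOn (hR.wordMap p r) {w | (M.run p w).isSome} {u | (N.run r u).isSome} := by
  intro u hu
  induction u generalizing p r with
  | nil => exact ⟨[], rfl, rfl⟩
  | cons b u ih =>
    obtain ⟨r₁, hr₁, hu₁⟩ := isSome_run_cons.mp hu
    obtain ⟨a, ha, hab⟩ := (hR.relabel_spec h).1.surjOn (Option.isSome_of_eq_some hr₁)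
    obtain ⟨p₁, hp₁⟩ := Option.isSome_iff_exists.mp ha
    obtain ⟨r₁', hr₁', hpr₁⟩ := hR.exists_relabel_succ h hp₁
    rw [hab, hr₁, Option.some_inj] at hr₁'
    subst hr₁'
    obtain ⟨w, hw, hwu⟩ := ih hpr₁ hu₁
    refine ⟨a :: w, isSome_run_cons.mpr ⟨p₁, hp₁, hw⟩, ?_⟩
    rw [hR.wordMap_cons hp₁ (hab ▸ hr₁), hab, hwu]

lemma bijOn_wordMap (h : R M.init N.init) :
    Set.BijOn (hR.wordMap M.init N.init) M.Lang N.Lang :=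
  ⟨fun _ hw => hR.run_wordMap h hw, hR.wordMap_injOn h, hR.wordMap_surjOn h⟩

end IsBisim

lemma pathTree_iso_of_bijOn {f : List A → List A}
    (hf : Set.BijOn f M.Lang N.Lang) (hnil : f [] = [])
    (hsnoc : ∀ w a, ∃ b, f (w ++ [a]) = f w ++ [b]) :
    RGraph.Iso M.pathTree N.pathTree := by
  have hlast : ∀ w a, f (w ++ [a]) = f w ++ [(f (w ++ [a])).getLastD a] := fun w a => by
    obtain ⟨b, hb⟩ := hsnoc w a
    rw [hb, List.getLastD_concat]
  let e : M.pathTree.E → N.pathTree.E := fun x =>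
    ⟨(f x.1.1, (f (x.1.1 ++ [x.1.2])).getLastD x.1.2), by
      rw [← hlast]; exact hf.mapsTo x.2⟩
  refine ⟨⟨hf.mapsTo.restrict f M.Lang N.Lang, e, Subtype.ext hnil, fun _ => rfl,
    fun x => Subtype.ext (hlast x.1.1 x.1.2).symm⟩, hf.bijective, ?_, ?_⟩
  · rintro ⟨⟨w, a⟩, hw⟩ ⟨⟨w', a'⟩, hw'⟩ hee
    obtain ⟨hfw, hb⟩ := Prod.mk.inj (congrArg Subtype.val hee)
    have hwa : w ++ [a] = w' ++ [a'] := hf.injOn hw hw' <|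
      (hlast w a).trans <| (congrArg₂ (· ++ [·]) hfw hb).trans (hlast w' a').symm
    obtain ⟨rfl, ha⟩ := List.append_inj' hwa rfl
    simp only [List.cons.injEq, and_true] at ha
    subst ha
    rfl
  · rintro ⟨⟨u, c⟩, hu⟩
    obtain ⟨z, hz, hzu⟩ := hf.surjOn hu
    obtain ⟨w, a, rfl⟩ : ∃ w a, z = w ++ [a] := by
      rcases List.eq_nil_or_concat' z with rfl | h
      · rw [hnil] at hzu; simp at hzu
      · exact h
    rw [hlast] at hzu
    obtain ⟨hwu, hac⟩ := List.append_inj' hzu rfl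
    simp only [List.cons.injEq, and_true] at hac
    exact ⟨⟨(w, a), hz⟩, Subtype.ext (Prod.ext hwu hac)⟩

lemma IsBisim.pathTree_iso {R : M.Q → N.Q → Prop} (hR : IsBisim R)
    (h : R M.init N.init) : RGraph.Iso M.pathTree N.pathTree :=
  pathTree_iso_of_bijOn (hR.bijOn_wordMap h) rfl (hR.wordMap_snoc _ _)

end Bisimulation

section Merge

variable (M : PDFA A) {p q : M.Q} (hqp : q ≠ p)

open scoped Classical in
noncomputable def mergeState (s : M.Q) : {s : M.Q // s ≠ p} :=
  if h : s = p then ⟨q, hqp⟩ else ⟨s, h⟩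

noncomputable def merge : PDFA A where
  Q := {s : M.Q // s ≠ p}
  finQ := @Subtype.finite _ M.finQ _
  neQ := ⟨⟨q, hqp⟩⟩
  δ s a := (M.δ s a).map (M.mergeState hqp)
  init := M.mergeState hqp M.init

variable {M}

lemma rel_mergeState {S : M.Q → M.Q → Prop} [IsTrans M.Q S]
    (hpq : S p q) {x y : M.Q} (h : S x y) : S x (M.mergeState hqp y).1 := by
  unfold mergeState
  split_ifs with hy
  · exact _root_.trans (hy ▸ h) hpq
  · exact h

lemma IsBisim.merge {S : M.Q → M.Q → Prop} [IsTrans M.Q S] (hS : IsBisim S) (hpq : S p q) :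
    IsBisim (N := M.merge hqp) fun s t => S s t.1 := by
  intro s t h
  obtain ⟨σ, hbij, hsucc⟩ := hS s t.1 h
  have hletters : (M.merge hqp).letters t = M.letters t.1 := by
    ext a
    show ((M.δ t.1 a).map (M.mergeState hqp)).isSome ↔ (M.δ t.1 a).isSome
    cases M.δ t.1 a <;> simp
  refine ⟨σ, hletters ▸ hbij, fun a s' t' hs ht => ?_⟩
  obtain ⟨t'', ht'', rfl⟩ := Option.map_eq_some_iff.mp ht
  exact rel_mergeState hqp hpq (hsucc a s' t'' hs ht'')

end Merge

/-- Otherwise merging `p` into `q` would give an automaton with the same path language tree and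
fewer states. -/
theorem GeomMinimal.eq_of_isBisim {M : PDFA A} (hfin : Finite A) (hne : Nonempty A)
    (hM : M.GeomMinimal) {R : M.Q → M.Q → Prop} (hR : IsBisim R) {p q : M.Q} (h : R p q) :
    p = q := by
  by_contra hpq
  have hmerge := hR.reflTransGen.merge (Ne.symm hpq) (.single h)
  have hcard := hM A hfin hne _
    (hmerge.pathTree_iso (rel_mergeState (Ne.symm hpq) (.single h) .refl))
  have := M.finQ
  exact (Finite.card_subtype_lt (p := (· ≠ p)) (not_not.mpr rfl)).not_ge hcard

variable {M : PDFA A}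

section Automorphisms

lemma run_init_eq_some_qstate (x : M.pathTree.V) : M.run M.init x.1 = some (M.qstate x.1 x.2) :=
  (Option.some_get x.2).symm

lemma run_init_snoc (x : M.pathTree.V) (a : A) :
    M.run M.init (x.1 ++ [a]) = M.δ (M.qstate x.1 x.2) a := by
  rw [run_snoc, ← Option.some_get x.2]
  rfl

lemma mem_letters_qstate {x : M.pathTree.V} {a : A} :
    a ∈ M.letters (M.qstate x.1 x.2) ↔ (M.run M.init (x.1 ++ [a])).isSome := by
  rw [run_init_snoc]
  rfl

lemma pathTree_adj_iff {x y : M.pathTree.V} : M.pathTree.Adj x y ↔ ∃ a, y.1 = x.1 ++ [a] := by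
  constructor
  · rintro ⟨e, rfl, rfl⟩
    exact ⟨e.1.2, rfl⟩
  · rintro ⟨a, ha⟩
    exact ⟨⟨(x.1, a), ha ▸ y.2⟩, rfl, Subtype.ext ha.symm⟩

lemma pathTree_reach_iff {x y : M.pathTree.V} : M.pathTree.Reach x y ↔ x.1 <+: y.1 := by
  constructor
  · rintro ⟨l, hl, rfl⟩
    induction l generalizing x with
    | nil => exact List.prefix_refl _
    | cons e l ih =>
      obtain ⟨hchain, hhead⟩ := hl
      have hs : M.pathTree.s e = x := hhead e rfl
      have hxe : x.1 <+: (M.pathTree.t e).1 := by rw [← hs]; exact List.prefix_append _ _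
      refine hxe.trans (ih ⟨hchain.tail, fun f hf => ?_⟩)
      cases l with
      | nil => simp at hf
      | cons f' l =>
        simp only [List.head?_cons, Option.mem_def, Option.some_inj] at hf
        exact hf ▸ (List.isChain_cons_cons.mp hchain).1.symm
  · rintro ⟨u, hu⟩
    induction u using List.reverseRecOn generalizing y with
    | nil =>
      obtain rfl : x = y := Subtype.ext (by simpa using hu)
      exact RGraph.reach_self _ _
    | append_singleton u c ih =>
      rw [← List.append_assoc] at hu
      have hxu : (M.run M.init (x.1 ++ u)).isSome := M.isSome_of_append (hu ▸ y.2)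
      obtain ⟨e, hs, rfl⟩ :=
        (pathTree_adj_iff (x := ⟨x.1 ++ u, hxu⟩) (y := y)).mpr ⟨c, hu.symm⟩
      exact RGraph.reach_target (hs ▸ ih rfl)

lemma not_pathTree_adj_root (x : M.pathTree.V) : ¬ M.pathTree.Adj x M.pathTree.root := by
  rw [pathTree_adj_iff]
  rintro ⟨a, ha⟩
  exact List.append_ne_nil_of_right_ne_nil _ (List.cons_ne_nil a []) ha.symm

/-- Edges are also reflected, since parents are unique. -/
lemma mem_autGroup_of_map_adj {g : Equiv.Perm M.pathTree.V}
    (hroot : g M.pathTree.root = M.pathTree.root)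
    (hadj : ∀ x y, M.pathTree.Adj x y → M.pathTree.Adj (g x) (g y)) :
    g ∈ M.pathTree.autGroup := by
  refine ⟨hroot, fun x y => ⟨hadj x y, fun hxy => ?_⟩⟩
  obtain ⟨u, a, hya⟩ : ∃ u a, y.1 = u ++ [a] := by
    rcases List.eq_nil_or_concat' y.1 with hy | h
    · obtain rfl : y = M.pathTree.root := Subtype.ext hy
      exact absurd (hroot ▸ hxy) (not_pathTree_adj_root _)
    · exact h
  let z : M.pathTree.V := ⟨u, M.isSome_of_append (hya ▸ y.2)⟩
  obtain ⟨b, hb⟩ := pathTree_adj_iff.mp hxy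
  obtain ⟨c, hc⟩ := pathTree_adj_iff.mp (hadj z y (pathTree_adj_iff.mpr ⟨a, hya⟩))
  have hzx : g z = g x := Subtype.ext <| by
    simpa using (congrArg List.dropLast hc).symm.trans (congrArg List.dropLast hb)
  exact pathTree_adj_iff.mpr ⟨a, g.injective hzx ▸ hya⟩

/-- The local injection `ˣσ(g)` of the paper, extended by the identity outside `Σ(x)`. -/
noncomputable def localMap (g : Equiv.Perm M.pathTree.V) (x : M.pathTree.V) (a : A) : A :=
  if h : (M.run M.init (x.1 ++ [a])).isSome then (g ⟨x.1 ++ [a], h⟩).1.getLastD a else a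

section LocalMap

variable {g h : Equiv.Perm M.pathTree.V} {x : M.pathTree.V} {a : A}

lemma localMap_of_not_isSome (ha : ¬ (M.run M.init (x.1 ++ [a])).isSome) :
    localMap g x a = a :=
  dif_neg ha

lemma localMap_eq {ha : (M.run M.init (x.1 ++ [a])).isSome} {w : List A} {b : A}
    (hb : (g ⟨x.1 ++ [a], ha⟩).1 = w ++ [b]) : localMap g x a = b := by
  rw [localMap, dif_pos ha, hb, List.getLastD_concat]

@[simp] lemma localMap_one : localMap 1 x a = a := by
  by_cases ha : (M.run M.init (x.1 ++ [a])).isSome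
  · exact localMap_eq (ha := ha) rfl
  · exact localMap_of_not_isSome ha

lemma apply_snoc (hg : g ∈ M.pathTree.autGroup) (ha : (M.run M.init (x.1 ++ [a])).isSome) :
    (g ⟨x.1 ++ [a], ha⟩).1 = (g x).1 ++ [localMap g x a] := by
  obtain ⟨b, hb⟩ := pathTree_adj_iff.mp <|
    (hg.2 x ⟨x.1 ++ [a], ha⟩).mp (pathTree_adj_iff.mpr ⟨a, rfl⟩)
  rw [hb, localMap_eq hb]

lemma length_apply (hg : g ∈ M.pathTree.autGroup) (x : M.pathTree.V) :
    (g x).1.length = x.1.length := by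
  obtain ⟨w, hw⟩ := x
  induction w using List.reverseRecOn with
  | nil => rw [show (⟨[], hw⟩ : M.pathTree.V) = M.pathTree.root from rfl, hg.1]
  | append_singleton w a ih =>
    rw [apply_snoc (x := ⟨w, M.isSome_of_append hw⟩) hg hw, List.length_append,
      ih (M.isSome_of_append hw)]
    simp

lemma localMap_mul (hg : g ∈ M.pathTree.autGroup) (hh : h ∈ M.pathTree.autGroup)
    (ha : (M.run M.init (x.1 ++ [a])).isSome) :
    localMap (g * h) x a = localMap g (h x) (localMap h x a) := by
  have hha := apply_snoc hh ha
  have hb : (M.run M.init ((h x).1 ++ [localMap h x a])).isSome := hha ▸ (h _).2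
  refine localMap_eq (ha := ha) (w := (g (h x)).1) ?_
  change (g (h ⟨x.1 ++ [a], ha⟩)).1 = _
  rw [show h ⟨x.1 ++ [a], ha⟩ = ⟨(h x).1 ++ [localMap h x a], hb⟩ from
    Subtype.ext hha, apply_snoc hg hb]

lemma localMap_mul_of_apply_eq (hg : g ∈ M.pathTree.autGroup) (hh : h ∈ M.pathTree.autGroup)
    (hx : h x = x) (a : A) : localMap (g * h) x a = localMap g x (localMap h x a) := by
  by_cases ha : (M.run M.init (x.1 ++ [a])).isSome
  · rw [localMap_mul hg hh ha, hx]
  · rw [localMap_of_not_isSome ha, localMap_of_not_isSome ha, localMap_of_not_isSome ha]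

lemma bijOn_localMap (hg : g ∈ M.pathTree.autGroup) (x : M.pathTree.V) :
    Set.BijOn (localMap g x) (M.letters (M.qstate x.1 x.2))
      (M.letters (M.qstate (g x).1 (g x).2)) := by
  refine ⟨fun a ha => ?_, fun a ha a' ha' heq => ?_, fun b hb => ?_⟩
  · rw [mem_letters_qstate] at ha ⊢
    exact apply_snoc hg ha ▸ (g _).2
  · rw [mem_letters_qstate] at ha ha'
    have hxa : (⟨x.1 ++ [a], ha⟩ : M.pathTree.V) = ⟨x.1 ++ [a'], ha'⟩ :=
      g.injective <| Subtype.ext <| by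
      rw [apply_snoc hg ha, apply_snoc hg ha', heq]
    simpa using congrArg Subtype.val hxa
  · rw [mem_letters_qstate] at hb
    have hg' := inv_mem hg
    have hgx : g⁻¹ (g x) = x := g.symm_apply_apply x
    have hc := apply_snoc hg' hb
    rw [hgx] at hc
    have hxc : (M.run M.init (x.1 ++ [localMap g⁻¹ (g x) b])).isSome := hc ▸ (g⁻¹ _).2
    refine ⟨_, mem_letters_qstate.mpr hxc, localMap_eq (ha := hxc) (w := (g x).1) ?_⟩
    rw [show (⟨x.1 ++ [localMap g⁻¹ (g x) b], hxc⟩ : M.pathTree.V) =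
      g⁻¹ ⟨(g x).1 ++ [b], hb⟩ from Subtype.ext hc.symm]
    exact congrArg Subtype.val (g.apply_symm_apply _)

lemma isBisim_of_mem_autGroup (hg : g ∈ M.pathTree.autGroup) :
    IsBisim fun s t =>
      ∃ x : M.pathTree.V, M.qstate x.1 x.2 = s ∧ M.qstate (g x).1 (g x).2 = t := by
  rintro _ _ ⟨x, rfl, rfl⟩
  refine ⟨localMap g x, bijOn_localMap hg x, fun a p' r' hp hr => ?_⟩
  rw [← run_init_snoc] at hp hr
  have ha : (M.run M.init (x.1 ++ [a])).isSome := Option.isSome_of_eq_some hp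
  exact ⟨⟨x.1 ++ [a], ha⟩, Option.get_of_eq_some ha hp,
    Option.get_of_eq_some _ ((congrArg (M.run M.init) (apply_snoc hg ha)).trans hr)⟩

end LocalMap

theorem GeomMinimal.qstate_apply (hfin : Finite A) (hne : Nonempty A) (hM : M.GeomMinimal)
    {g : Equiv.Perm M.pathTree.V} (hg : g ∈ M.pathTree.autGroup) (x : M.pathTree.V) :
    M.qstate (g x).1 (g x).2 = M.qstate x.1 x.2 :=
  (hM.eq_of_isBisim hfin hne (isBisim_of_mem_autGroup hg) ⟨x, rfl, rfl⟩).symm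

end Automorphisms

section RigidStabilizers

variable (M) in
/-- `Rist(n)` in the paper. -/
def ristLevel (n : ℕ) : Subgroup (Equiv.Perm M.pathTree.V) :=
  ⨆ v ∈ {v : M.pathTree.V | v.1.length = n}, M.pathTree.rist v

variable (M) in
def ball (n : ℕ) : Set M.pathTree.V := {x | x.1.length ≤ n}

lemma mem_ristLevel_of_mem_rist {n : ℕ} {v : M.pathTree.V} (hv : v.1.length = n)
    {g : Equiv.Perm M.pathTree.V} (hg : g ∈ M.pathTree.rist v) : g ∈ M.ristLevel n :=
  le_iSup₂ (f := fun v (_ : v ∈ {v : M.pathTree.V | v.1.length = n}) => M.pathTree.rist v)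
    v hv hg

lemma rist_le_fixingSubgroup (v : M.pathTree.V) :
    M.pathTree.rist v ≤ fixingSubgroup (Equiv.Perm M.pathTree.V) (M.ball v.1.length) := by
  rintro g ⟨hga, hgo⟩
  have hnot_reach : ∀ x : M.pathTree.V, x.1.length ≤ v.1.length → x ≠ v →
      ¬ M.pathTree.Reach v x := fun x hx hxv hr =>
    hxv (Subtype.ext ((pathTree_reach_iff.mp hr).eq_of_length_le hx).symm)
  have hgv : g v = v := by
    by_contra hne
    exact hne (g.injective (hgo _ (hnot_reach _ (length_apply hga v).le hne)))
  refine (mem_fixingSubgroup_iff _).mpr fun x hx => ?_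
  by_cases hxv : x = v
  · exact hxv ▸ hgv
  · exact hgo x (hnot_reach x hx hxv)

lemma ristLevel_le (n : ℕ) : M.ristLevel n ≤
    M.pathTree.autGroup ⊓ fixingSubgroup (Equiv.Perm M.pathTree.V) (M.ball n) :=
  iSup₂_le fun v hv => le_inf inf_le_left (hv ▸ rist_le_fixingSubgroup v)

section ConeRestrict

variable {m : ℕ} {g : Equiv.Perm M.pathTree.V}
  (hg : g ∈ M.pathTree.autGroup ⊓ fixingSubgroup (Equiv.Perm M.pathTree.V) (M.ball m))

include hg

lemma apply_of_length_le {x : M.pathTree.V} (hx : x.1.length ≤ m) : g x = x :=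
  (mem_fixingSubgroup_iff _).mp hg.2 x hx

lemma take_apply (x : M.pathTree.V) : (g x).1.take m = x.1.take m := by
  obtain ⟨w, hw⟩ := x
  induction w using List.reverseRecOn with
  | nil => rw [apply_of_length_le hg (x := ⟨[], hw⟩) (Nat.zero_le m)]
  | append_singleton w a ih =>
    by_cases hwa : (w ++ [a]).length ≤ m
    · rw [apply_of_length_le hg (x := ⟨w ++ [a], hw⟩) hwa]
    · have hwm : m ≤ w.length := by simp at hwa; omega
      have hgw : m ≤ (g ⟨w, M.isSome_of_append hw⟩).1.length :=
        (length_apply hg.1 ⟨w, M.isSome_of_append hw⟩).symm ▸ hwm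
      rw [apply_snoc (x := ⟨w, M.isSome_of_append hw⟩) hg.1 hw,
        List.take_append_of_le_length hgw, List.take_append_of_le_length hwm, ih]

open scoped Classical in
/-- The restriction of `g` to the cones at the words of `S`; the cone at a word `w` of length `m`
consists of the `x` with `x.take m = w`. -/
noncomputable def coneRestrict (S : Set (List A)) : Equiv.Perm M.pathTree.V :=
  Equiv.Perm.ofSubtype <| g.subtypePerm (p := fun x => x.1.take m ∈ S) fun x => by
    rw [take_apply hg]

open scoped Classical in
lemma coneRestrict_apply (S : Set (List A)) (x : M.pathTree.V) :
    coneRestrict hg S x = if x.1.take m ∈ S then g x else x := by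
  unfold coneRestrict
  split_ifs with hx
  · exact Equiv.Perm.ofSubtype_apply_of_mem (p := fun x : M.pathTree.V => x.1.take m ∈ S) _ hx
  · exact Equiv.Perm.ofSubtype_apply_of_not_mem (p := fun x : M.pathTree.V => x.1.take m ∈ S) _
      hx

lemma coneRestrict_apply_of_length_le (S : Set (List A)) {x : M.pathTree.V}
    (hx : x.1.length ≤ m) : coneRestrict hg S x = x := by
  rw [coneRestrict_apply, apply_of_length_le hg hx, ite_self]

lemma coneRestrict_mem_autGroup (S : Set (List A)) : coneRestrict hg S ∈ M.pathTree.autGroup := by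
  refine mem_autGroup_of_map_adj (coneRestrict_apply_of_length_le hg S (Nat.zero_le m))
    fun x y hxy => ?_
  obtain ⟨c, hc⟩ := pathTree_adj_iff.mp hxy
  by_cases hxm : m ≤ x.1.length
  · have hy : y.1.take m = x.1.take m := by rw [hc, List.take_append_of_le_length hxm]
    rw [coneRestrict_apply, coneRestrict_apply, hy]
    split_ifs
    · exact (hg.1.2 x y).mp hxy
    · exact hxy
  · have hym : y.1.length ≤ m := by rw [hc]; simp; omega
    rwa [coneRestrict_apply_of_length_le hg S (by omega), coneRestrict_apply_of_length_le hg S hym]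

lemma coneRestrict_insert {w : List A} {S : Set (List A)} (hw : w ∉ S) :
    coneRestrict hg (insert w S) = coneRestrict hg {w} * coneRestrict hg S := by
  ext x
  rw [Equiv.Perm.mul_apply, coneRestrict_apply hg S x, coneRestrict_apply hg (insert w S) x]
  by_cases hxS : x.1.take m ∈ S
  · have hxw : x.1.take m ∉ ({w} : Set (List A)) := fun h => hw (h ▸ hxS)
    rw [if_pos hxS, if_pos (Set.mem_insert_of_mem w hxS), coneRestrict_apply, take_apply hg,
      if_neg hxw]
  · rw [if_neg hxS, coneRestrict_apply]
    by_cases hxw : x.1.take m ∈ ({w} : Set (List A))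
    · rw [if_pos (Set.mem_insert_iff.mpr (Or.inl hxw)), if_pos hxw]
    · rw [if_neg fun h => (Set.mem_insert_iff.mp h).elim hxw hxS, if_neg hxw]

lemma coneRestrict_singleton_mem_rist (w : M.pathTree.V) :
    coneRestrict hg {w.1} ∈ M.pathTree.rist w := by
  refine ⟨coneRestrict_mem_autGroup hg _, fun x hx => ?_⟩
  rw [coneRestrict_apply, if_neg]
  intro hxw
  rw [Set.mem_singleton_iff] at hxw
  exact hx (pathTree_reach_iff.mpr (hxw ▸ List.take_prefix _ _))

end ConeRestrict

lemma isSome_run_take (x : M.pathTree.V) (m : ℕ) : (M.run M.init (x.1.take m)).isSome :=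
  M.isSome_of_append (w := x.1.drop m) ((List.take_append_drop m x.1).symm ▸ x.2)

/-- An automorphism fixing the ball is the product of its restrictions to the finitely many cones
at level `m`. -/
theorem ristLevel_eq (hfin : Finite A) (m : ℕ) : M.ristLevel m =
    M.pathTree.autGroup ⊓ fixingSubgroup (Equiv.Perm M.pathTree.V) (M.ball m) := by
  refine le_antisymm (ristLevel_le m) fun g hg => ?_
  let S : Set (List A) := {w | w ∈ M.Lang ∧ w.length = m}
  have hS : S.Finite := (List.finite_length_eq A m).subset fun _ hw => hw.2
  have hgS : coneRestrict hg S = g := by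
    ext x
    rw [coneRestrict_apply]
    split_ifs with hx
    · rfl
    · refine (apply_of_length_le hg ?_).symm
      by_contra hlong
      exact hx ⟨isSome_run_take x m, List.length_take_of_le (le_of_not_ge hlong)⟩
  rw [← hgS]
  refine Set.Finite.induction_on_subset (motive := fun T _ => coneRestrict hg T ∈ M.ristLevel m)
    S hS ?_ fun {w T} hw _ hwT hT => ?_
  · convert one_mem (M.ristLevel m)
    ext x
    simp [coneRestrict_apply]
  · rw [coneRestrict_insert hg hwT]
    exact mul_mem
      (mem_ristLevel_of_mem_rist hw.2 (coneRestrict_singleton_mem_rist hg ⟨w, hw.1⟩)) hT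

end RigidStabilizers

section LevelSym

lemma localMap_inv_localMap {g : Equiv.Perm M.pathTree.V} (hg : g ∈ M.pathTree.autGroup)
    {x : M.pathTree.V} (hx : g x = x) (a : A) : localMap g⁻¹ x (localMap g x a) = a := by
  rw [← localMap_mul_of_apply_eq (inv_mem hg) hg hx, inv_mul_cancel, localMap_one]

noncomputable def localPerm (v : M.pathTree.V) :
    ↥(M.pathTree.autGroup ⊓ MulAction.stabilizer (Equiv.Perm M.pathTree.V) v) →*
      Equiv.Perm A where
  toFun g :=
    { toFun := localMap g.1 v
      invFun := localMap g.1⁻¹ v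
      left_inv := localMap_inv_localMap g.2.1 g.2.2
      right_inv := fun a => by
        simpa using localMap_inv_localMap (inv_mem g.2.1) (inv_mem g.2).2 a }
  map_one' := Equiv.ext fun _ => localMap_one
  map_mul' g h := Equiv.ext (localMap_mul_of_apply_eq g.2.1 h.2.1 h.2.2)

lemma localPerm_mem_symQ (hfin : Finite A) (hne : Nonempty A) (hM : M.GeomMinimal)
    (v : M.pathTree.V)
    (g : ↥(M.pathTree.autGroup ⊓ MulAction.stabilizer (Equiv.Perm M.pathTree.V) v)) :
    localPerm v g ∈ M.SymQ (M.qstate v.1 v.2) := by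
  intro a
  by_cases ha : (M.run M.init (v.1 ++ [a])).isSome
  · refine ⟨?_, fun hnone => absurd ha (by rw [run_init_snoc, hnone]; simp)⟩
    have hga : (g.1 ⟨v.1 ++ [a], ha⟩).1 = v.1 ++ [localMap g.1 v a] := by
      rw [apply_snoc g.2.1 ha, show g.1 v = v from g.2.2]
    let va : M.pathTree.V := ⟨v.1 ++ [a], ha⟩
    change M.δ _ (localMap g.1 v a) = _
    calc M.δ _ (localMap g.1 v a) = M.run M.init (g.1 va).1 := by rw [hga, run_init_snoc]
      _ = M.run M.init va.1 := by
        rw [run_init_eq_some_qstate, run_init_eq_some_qstate, hM.qstate_apply hfin hne g.2.1]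
      _ = M.δ _ a := run_init_snoc v a
  · have hτ : localPerm v g a = a := localMap_of_not_isSome ha
    exact ⟨by rw [hτ], fun _ => hτ⟩

variable (M) in
/-- `Sym(n)` in the paper. -/
abbrev SymLevel (n : ℕ) : Type :=
  ∀ v : {v : M.pathTree.V // v.1.length = n}, ↥(M.SymQ (M.qstate v.1.1 v.1.2))

lemma ristLevel_le_stabilizer {n : ℕ} (v : {v : M.pathTree.V // v.1.length = n}) :
    M.ristLevel n ≤
      M.pathTree.autGroup ⊓ MulAction.stabilizer (Equiv.Perm M.pathTree.V) v.1 :=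
  fun _ hg =>
    ⟨(ristLevel_le n hg).1, (mem_fixingSubgroup_iff _).mp (ristLevel_le n hg).2 v.1 v.2.le⟩

/-- `σₙ` in the paper. -/
noncomputable def levelSym (hfin : Finite A) (hne : Nonempty A) (hM : M.GeomMinimal) (n : ℕ) :
    ↥(M.ristLevel n) →* M.SymLevel n :=
  MonoidHom.pi fun v =>
    ((localPerm v.1).comp (Subgroup.inclusion (ristLevel_le_stabilizer v))).codRestrict _
      fun _ => localPerm_mem_symQ hfin hne hM v.1 _

lemma levelSym_apply_apply (hfin : Finite A) (hne : Nonempty A) (hM : M.GeomMinimal) {n : ℕ}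
    (g : ↥(M.ristLevel n)) (v : {v : M.pathTree.V // v.1.length = n}) (a : A) :
    (levelSym hfin hne hM n g v).1 a = localMap g.1 v.1 a :=
  rfl

lemma mem_fixingSubgroup_ball_succ_iff {n : ℕ} {g : Equiv.Perm M.pathTree.V}
    (hg : g ∈ M.pathTree.autGroup ⊓ fixingSubgroup (Equiv.Perm M.pathTree.V) (M.ball n)) :
    g ∈ fixingSubgroup (Equiv.Perm M.pathTree.V) (M.ball (n + 1)) ↔
      ∀ v : {v : M.pathTree.V // v.1.length = n}, ∀ a, localMap g v.1 a = a := by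
  rw [mem_fixingSubgroup_iff]
  constructor
  · intro hfix v a
    by_cases ha : (M.run M.init (v.1.1 ++ [a])).isSome
    · have hva := hfix ⟨v.1.1 ++ [a], ha⟩ (show (v.1.1 ++ [a]).length ≤ n + 1 by simp [v.2])
      exact localMap_eq (ha := ha) (w := v.1.1) (congrArg Subtype.val hva)
    · exact localMap_of_not_isSome ha
  · intro hloc x hx
    by_cases hxn : x.1.length ≤ n
    · exact apply_of_length_le hg hxn
    obtain ⟨u, a, hua⟩ : ∃ u a, x.1 = u ++ [a] := (List.eq_nil_or_concat' x.1).resolve_left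
      fun h => hxn (by simp [h])
    have hu : (M.run M.init u).isSome := M.isSome_of_append (hua ▸ x.2)
    have hun : u.length = n := by
      have : x.1.length ≤ n + 1 := hx
      rw [hua, List.length_append, List.length_singleton] at this hxn
      omega
    obtain ⟨w, hw⟩ := x
    subst hua
    apply Subtype.ext
    change (g ⟨u ++ [a], hw⟩).1 = u ++ [a]
    rw [apply_snoc (x := ⟨u, hu⟩) hg.1 hw, hloc ⟨⟨u, hu⟩, hun⟩ a,
      apply_of_length_le hg (x := ⟨u, hu⟩) hun.le]

lemma ker_levelSym (hfin : Finite A) (hne : Nonempty A) (hM : M.GeomMinimal) (n : ℕ) :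
    (levelSym hfin hne hM n).ker = (M.ristLevel (n + 1)).comap (M.ristLevel n).subtype := by
  ext g
  have hg := ristLevel_le n g.2
  rw [MonoidHom.mem_ker, Subgroup.mem_comap, Subgroup.coe_subtype, ristLevel_eq hfin (n + 1),
    Subgroup.mem_inf, and_iff_right (Subgroup.mem_inf.mp hg).1, mem_fixingSubgroup_ball_succ_iff hg]
  simp only [funext_iff, Subtype.ext_iff, Equiv.ext_iff, levelSym_apply_apply]
  rfl

end LevelSym

section LevelSection

lemma run_modify_of_mem_symQ {l : List A} {q : M.Q} (hq : M.run M.init (l.take n) = some q)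
    {σ : Equiv.Perm A} (hσ : σ ∈ M.SymQ q) :
    M.run M.init (l.modify n σ) = M.run M.init l := by
  by_cases hn : n < l.length
  · conv_rhs => rw [← List.take_append_drop n l, List.drop_eq_getElem_cons hn]
    rw [List.modify_eq_take_cons_drop hn, run_append, run_append, hq]
    simp only [Option.bind_some, run_cons, (hσ _).1]
  · rw [List.modify_eq_self (by omega)]

open scoped Classical in
noncomputable def levelPerm (τ : M.SymLevel n) (w : List A) : Equiv.Perm A :=
  if h : (M.run M.init w).isSome ∧ w.length = n then (τ ⟨⟨w, h.1⟩, h.2⟩).1 else 1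

lemma levelPerm_mul (τ σ : M.SymLevel n) (w : List A) :
    levelPerm (τ * σ) w = levelPerm τ w * levelPerm σ w := by
  unfold levelPerm
  split_ifs <;> rfl

lemma levelPerm_one (w : List A) : levelPerm (1 : M.SymLevel n) w = 1 := by
  unfold levelPerm
  split_ifs <;> rfl

noncomputable def levelRelabel (τ : M.SymLevel n) (l : List A) : List A :=
  l.modify n (levelPerm τ (l.take n))

lemma take_levelRelabel (τ : M.SymLevel n) (l : List A) :
    (levelRelabel τ l).take n = l.take n := by
  rw [levelRelabel, List.take_modify, List.modify_eq_self (by simp)]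

lemma levelRelabel_mul (τ σ : M.SymLevel n) (l : List A) :
    levelRelabel (τ * σ) l = levelRelabel τ (levelRelabel σ l) := by
  rw [levelRelabel, levelRelabel, take_levelRelabel, levelRelabel, List.modify_modify_eq,
    levelPerm_mul, Equiv.Perm.coe_mul]

lemma levelRelabel_one (l : List A) : levelRelabel (1 : M.SymLevel n) l = l := by
  rw [levelRelabel, levelPerm_one, Equiv.Perm.coe_one, List.modify_id]

lemma run_levelRelabel (τ : M.SymLevel n) (l : List A) :
    M.run M.init (levelRelabel τ l) = M.run M.init l := by
  unfold levelRelabel levelPerm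
  split_ifs with h
  · exact run_modify_of_mem_symQ (run_init_eq_some_qstate ⟨_, h.1⟩)
      (τ ⟨⟨_, h.1⟩, h.2⟩).2
  · rw [Equiv.Perm.coe_one, List.modify_id]

lemma levelRelabel_of_length_le (τ : M.SymLevel n) {l : List A} (hl : l.length ≤ n) :
    levelRelabel τ l = l :=
  List.modify_eq_self hl

lemma levelRelabel_snoc (τ : M.SymLevel n) (l : List A) (c : A) :
    ∃ c', levelRelabel τ (l ++ [c]) = levelRelabel τ l ++ [c'] := by
  rcases lt_trichotomy n l.length with hn | rfl | hn
  · rw [levelRelabel, levelRelabel, List.take_append_of_le_length hn.le,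
      List.modify_append_singleton]
    exact ⟨_, rfl⟩
  · rw [levelRelabel, List.take_left, List.modify_append_singleton, List.modify_eq_self le_rfl,
      levelRelabel_of_length_le τ le_rfl]
    exact ⟨_, rfl⟩
  · rw [levelRelabel_of_length_le τ (by simp; omega), levelRelabel_of_length_le τ hn.le]
    exact ⟨c, rfl⟩

lemma levelRelabel_level_snoc (τ : M.SymLevel n) (v : {v : M.pathTree.V // v.1.length = n})
    (a : A) : levelRelabel τ (v.1.1 ++ [a]) = v.1.1 ++ [(τ v).1 a] := by
  obtain ⟨⟨w, hw⟩, rfl⟩ := v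
  rw [levelRelabel, List.take_left, List.modify_append_singleton, if_pos rfl,
    List.modify_eq_self le_rfl, levelPerm, dif_pos ⟨hw, rfl⟩]

variable (M n) in
noncomputable def sectionPerm : M.SymLevel n →* Equiv.Perm M.pathTree.V where
  toFun τ :=
    { toFun x := ⟨levelRelabel τ x.1, by rw [run_levelRelabel]; exact x.2⟩
      invFun x := ⟨levelRelabel τ⁻¹ x.1, by rw [run_levelRelabel]; exact x.2⟩
      left_inv x := Subtype.ext <| show levelRelabel τ⁻¹ (levelRelabel τ x.1) = x.1 by
        rw [← levelRelabel_mul, inv_mul_cancel, levelRelabel_one]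
      right_inv x := Subtype.ext <| show levelRelabel τ (levelRelabel τ⁻¹ x.1) = x.1 by
        rw [← levelRelabel_mul, mul_inv_cancel, levelRelabel_one] }
  map_one' := Equiv.ext fun x => Subtype.ext (levelRelabel_one x.1)
  map_mul' τ σ := Equiv.ext fun x => Subtype.ext (levelRelabel_mul τ σ x.1)

lemma sectionPerm_apply_val (τ : M.SymLevel n) (x : M.pathTree.V) :
    (sectionPerm M n τ x).1 = levelRelabel τ x.1 :=
  rfl

lemma sectionPerm_mem (τ : M.SymLevel n) : sectionPerm M n τ ∈
    M.pathTree.autGroup ⊓ fixingSubgroup (Equiv.Perm M.pathTree.V) (M.ball n) := by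
  have hfix : sectionPerm M n τ ∈ fixingSubgroup (Equiv.Perm M.pathTree.V) (M.ball n) :=
    (mem_fixingSubgroup_iff _).mpr fun x hx => Subtype.ext (levelRelabel_of_length_le τ hx)
  refine ⟨mem_autGroup_of_map_adj ((mem_fixingSubgroup_iff _).mp hfix _ (Nat.zero_le n))
    fun x y hxy => ?_, hfix⟩
  obtain ⟨c, hc⟩ := pathTree_adj_iff.mp hxy
  obtain ⟨c', hc'⟩ := levelRelabel_snoc τ x.1 c
  exact pathTree_adj_iff.mpr ⟨c', by rw [sectionPerm_apply_val, hc, hc', sectionPerm_apply_val]⟩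

noncomputable def levelSection (hfin : Finite A) (n : ℕ) : M.SymLevel n →* ↥(M.ristLevel n) :=
  (sectionPerm M n).codRestrict _ fun τ => by rw [ristLevel_eq hfin]; exact sectionPerm_mem τ

lemma levelSym_comp_levelSection (hfin : Finite A) (hne : Nonempty A) (hM : M.GeomMinimal) :
    (levelSym hfin hne hM n).comp (levelSection hfin n) = MonoidHom.id _ := by
  ext τ v a
  change localMap (sectionPerm M n τ) v.1 a = (τ v).1 a
  by_cases ha : (M.run M.init (v.1.1 ++ [a])).isSome
  · exact localMap_eq (ha := ha) (levelRelabel_level_snoc τ v a)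
  · rw [localMap_of_not_isSome ha]
    refine ((τ v).2 a).2 ?_ |>.symm
    rwa [run_init_snoc, Option.not_isSome_iff_eq_none] at ha

end LevelSection

end PDFA

/-- Split exact sequence of rigid level stabilizers. Let `M` be a
geometrically minimal DFA with path language tree `T` and let `n ∈ ℕ`. There is a
group homomorphism `σₙ` from `Rist(n)` to `Sym(n) = ∏_{v ∈ ℒ, |v| = n} Sym(q(v))`
sending `g` to its family of local permutations at the words of length `n` (in
particular all local injections of elements of `Rist(n)` at level `n` are admissible),
and `σₙ` is surjective, has kernel `Rist(n + 1)` and admits a group-theoretic section;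
thus `1 → Rist(n+1) → Rist(n) → Sym(n) → 1` is split exact and `Rist(n)` is a
semidirect product of `Sym(n)` with `Rist(n + 1)`. -/
theorem stmt19 {A : Type} (hfin : Finite A) (hne : Nonempty A)
    (M : PDFA A) (hM : M.GeomMinimal) (n : ℕ) :
    ∃ φ : ↥(⨆ v ∈ {v : M.pathTree.V | v.1.length = n}, M.pathTree.rist v) →*
        (∀ v : {v : M.pathTree.V // v.1.length = n}, ↥(M.SymQ (M.qstate v.1.1 v.1.2))),
      (∀ g : ↥(⨆ v ∈ {v : M.pathTree.V | v.1.length = n}, M.pathTree.rist v),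
        ∀ v : {v : M.pathTree.V // v.1.length = n},
        ∀ (w : M.pathTree.V) (a : A), w.1 = v.1.1 ++ [a] →
          (g.1 w).1 = (g.1 v.1).1 ++ [(φ g v).1 a]) ∧
      Function.Surjective φ ∧
      φ.ker = (⨆ v ∈ {v : M.pathTree.V | v.1.length = n + 1}, M.pathTree.rist v).comap
        (⨆ v ∈ {v : M.pathTree.V | v.1.length = n}, M.pathTree.rist v).subtype ∧
      ∃ s : (∀ v : {v : M.pathTree.V // v.1.length = n},
              ↥(M.SymQ (M.qstate v.1.1 v.1.2))) →*
            ↥(⨆ v ∈ {v : M.pathTree.V | v.1.length = n}, M.pathTree.rist v),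
        φ.comp s = MonoidHom.id _ := by
  have hsplit := PDFA.levelSym_comp_levelSection (M := M) (n := n) hfin hne hM
  refine ⟨PDFA.levelSym hfin hne hM n, fun g v ⟨w, hw⟩ a hwa => ?_,
    Function.RightInverse.surjective (g := PDFA.levelSection hfin n) (DFunLike.congr_fun hsplit),
    PDFA.ker_levelSym hfin hne hM n, PDFA.levelSection hfin n, hsplit⟩
  subst hwa
  exact PDFA.apply_snoc (x := v.1) (PDFA.ristLevel_le n g.2).1 hw
end
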